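/- Let A be an N×N complex matrix, ε > 0, D_ε = A + (1/ε)I, and ρ a density matrix with Tr[D_ε ρ D_ε*] ≠ 0. Then the difference (D_ε ρ D_ε*)/Tr[D_ε ρ D_ε*] − ρ − ε(Aρ + ρA* − Tr[ρ(A+A*)]ρ) has operator norm O(ε²) as ε → 0, uniformly over all density matrices ρ. More precisely, there exist constants ε₀ > 0 and K > 0 such that for all 0 < ε ≤ ε₀ and all density matrices ρ, ‖(D_ε ρ D_ε*)/Tr[D_ε ρ D_ε*] − ρ − ε(Aρ + ρA* − Tr[ρ(A+A*)]ρ)‖ ≤ K ε². -/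

import Mathlib

/-!
With `B = Aρ + ρA*`, `C = AρA*`, `s = Tr B = Tr[ρ(A + A*)]` and `c = Tr C`, one has
`D_ε ρ D_ε* = ε⁻² (ρ + εB + ε²C)` with trace `ε⁻² τ`, `τ = 1 + εs + ε²c`, so the factor `ε⁻²`
cancels on normalizing. The exact identity
`τ⁻¹ (ρ + εB + ε²C) - ρ - ε(B - sρ) = ε² τ⁻¹ (C - sB + (s² - c)ρ - εc(B - sρ))`
then reduces the claim to uniform bounds: a density matrix has Frobenius norm at most `1`
(because `|ρᵢⱼ|² ≤ ρᵢᵢ ρⱼⱼ`), so `ρ, B, C, s, c` are bounded by a constant `β`, and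
`|τ| ≥ 1/2` once `ε ≤ 1/(4β)`.
-/

open Matrix ComplexOrder

attribute [local instance] Matrix.frobeniusNormedAddCommGroup Matrix.frobeniusNormedSpace

theorem inv_smul_expansion_sub_eq {𝕜 M : Type*} [Field 𝕜] [AddCommGroup M] [Module 𝕜 M]
    (ρ B C : M) {e s c : 𝕜} (hτ : 1 + e * s + e ^ 2 * c ≠ 0) :
    (1 + e * s + e ^ 2 * c)⁻¹ • (ρ + e • B + e ^ 2 • C) - ρ - e • (B - s • ρ) =
      (e ^ 2 * (1 + e * s + e ^ 2 * c)⁻¹) •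
        (C - s • B + (s ^ 2 - c) • ρ - (e * c) • (B - s • ρ)) := by
  have hsplit : ρ + e • B + e ^ 2 • C = (1 + e * s + e ^ 2 * c) • (ρ + e • (B - s • ρ)) +
      e ^ 2 • (C - s • B + (s ^ 2 - c) • ρ - (e * c) • (B - s • ρ)) := by
    module
  rw [hsplit, smul_add, smul_smul, inv_mul_cancel₀ hτ, one_smul, smul_smul, mul_comm]
  abel

theorem one_half_le_norm_one_add {𝕜 : Type*} [NormedField 𝕜] {z : 𝕜} (hz : ‖z‖ ≤ 1 / 2) :
    1 / 2 ≤ ‖1 + z‖ := by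
  have := norm_sub_norm_le (1 : 𝕜) (-z)
  rw [sub_neg_eq_add, norm_one, norm_neg] at this
  linarith

section Expansion

variable {𝕜 E : Type*} [NormedField 𝕜] [SeminormedAddCommGroup E] [NormedSpace 𝕜 E]
  {ρ B C : E} {e s c : 𝕜} {β : ℝ}

theorem norm_expansion_remainder_le (hβ : 1 ≤ β) (hρ : ‖ρ‖ ≤ β) (hB : ‖B‖ ≤ β) (hC : ‖C‖ ≤ β)
    (hs : ‖s‖ ≤ β) (hc : ‖c‖ ≤ β) (he : ‖e‖ ≤ 1) :
    ‖C - s • B + (s ^ 2 - c) • ρ - (e * c) • (B - s • ρ)‖ ≤ 6 * β ^ 3 := by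
  have hsρ : ‖s • ρ‖ ≤ β ^ 2 := by rw [norm_smul, sq]; gcongr
  have hs2c : ‖s ^ 2 - c‖ ≤ β ^ 2 + β :=
    (norm_sub_le _ _).trans (by rw [norm_pow]; gcongr)
  have hBsρ : ‖B - s • ρ‖ ≤ β + β ^ 2 := (norm_sub_le _ _).trans (add_le_add hB hsρ)
  calc ‖C - s • B + (s ^ 2 - c) • ρ - (e * c) • (B - s • ρ)‖
      ≤ ‖C‖ + ‖s‖ * ‖B‖ + ‖s ^ 2 - c‖ * ‖ρ‖ + ‖e‖ * ‖c‖ * ‖B - s • ρ‖ := by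
        refine ((norm_sub_le _ _).trans (add_le_add_left ((norm_add_le _ _).trans
          (add_le_add_left (norm_sub_le _ _) _)) _)).trans_eq ?_
        simp only [norm_smul, norm_mul]
    _ ≤ β + β * β + (β ^ 2 + β) * β + 1 * β * (β + β ^ 2) := by gcongr
    _ ≤ 6 * β ^ 3 := by nlinarith

theorem norm_normalized_expansion_sub_le (hβ : 1 ≤ β) (hρ : ‖ρ‖ ≤ β) (hB : ‖B‖ ≤ β)
    (hC : ‖C‖ ≤ β) (hs : ‖s‖ ≤ β) (hc : ‖c‖ ≤ β) (he : ‖e‖ ≤ 1 / (4 * β)) :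
    ‖(1 + e * s + e ^ 2 * c)⁻¹ • (ρ + e • B + e ^ 2 • C) - ρ - e • (B - s • ρ)‖ ≤
      12 * β ^ 3 * ‖e‖ ^ 2 := by
  have heβ : ‖e‖ * β ≤ 1 / 4 := by
    rw [le_div_iff₀ (by positivity)] at he; linarith
  have he1 : ‖e‖ ≤ 1 := by nlinarith [norm_nonneg e]
  have hz : ‖e * s + e ^ 2 * c‖ ≤ 1 / 2 := calc
    ‖e * s + e ^ 2 * c‖ ≤ ‖e‖ * ‖s‖ + ‖e‖ ^ 2 * ‖c‖ :=
      (norm_add_le _ _).trans_eq (by rw [norm_mul, norm_mul, norm_pow])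
    _ ≤ ‖e‖ * β + ‖e‖ * β := by
      gcongr; nlinarith [norm_nonneg e]
    _ ≤ 1 / 2 := by linarith
  have hτ : 1 / 2 ≤ ‖1 + e * s + e ^ 2 * c‖ := by
    rw [add_assoc]; exact one_half_le_norm_one_add hz
  have hτ0 : 1 + e * s + e ^ 2 * c ≠ 0 := norm_pos_iff.mp (by linarith)
  rw [inv_smul_expansion_sub_eq ρ B C hτ0, norm_smul, norm_mul, norm_pow, norm_inv]
  calc ‖e‖ ^ 2 * ‖1 + e * s + e ^ 2 * c‖⁻¹ *
        ‖C - s • B + (s ^ 2 - c) • ρ - (e * c) • (B - s • ρ)‖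
      ≤ ‖e‖ ^ 2 * 2 * (6 * β ^ 3) := by
        gcongr
        · exact inv_le_of_inv_le₀ (by norm_num) (by linarith)
        · exact norm_expansion_remainder_le hβ hρ hB hC hs hc he1
    _ = 12 * β ^ 3 * ‖e‖ ^ 2 := by ring

end Expansion

namespace Matrix

theorem PosSemidef.norm_apply_sq_le {n : Type*} {ρ : Matrix n n ℂ}
    (hρ : ρ.PosSemidef) (i j : n) : ‖ρ i j‖ ^ 2 ≤ (ρ i i).re * (ρ j j).re := by
  have hdet := (hρ.submatrix ![i, j]).det_nonneg
  rw [det_fin_two] at hdet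
  simp only [submatrix_apply, cons_val_zero, cons_val_one] at hdet
  rw [← hρ.1.apply j i, ← hρ.1.coe_re_apply_self i, ← hρ.1.coe_re_apply_self j,
    ← starRingEnd_apply, RCLike.mul_conj] at hdet
  exact_mod_cast sub_nonneg.mp hdet

variable {n : Type*} [Fintype n]

theorem PosSemidef.frobenius_norm_le_re_trace {ρ : Matrix n n ℂ}
    (hρ : ρ.PosSemidef) : ‖ρ‖ ≤ ρ.trace.re := by
  have hsum : ∑ i, ∑ j, ‖ρ i j‖ ^ (2 : ℝ) ≤ ρ.trace.re ^ 2 := by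
    rw [trace, Complex.re_sum, sq, Finset.sum_mul_sum]
    gcongr with i _ j _
    rw [Real.rpow_two]
    exact hρ.norm_apply_sq_le i j
  have htr : 0 ≤ ρ.trace.re := (Complex.le_def.mp hρ.trace_nonneg).1
  rw [frobenius_norm_def, ← Real.sqrt_eq_rpow, ← Real.sqrt_sq htr]
  exact Real.sqrt_le_sqrt hsum

theorem exists_norm_trace_le : ∃ T ≥ 0, ∀ M : Matrix n n ℂ, ‖M.trace‖ ≤ T * ‖M‖ :=
  ⟨_, norm_nonneg _, (LinearMap.toContinuousLinearMap (traceLinearMap n ℂ ℂ)).le_opNorm⟩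

theorem trace_mul_add_mul_conjTranspose (A ρ : Matrix n n ℂ) :
    (A * ρ + ρ * Aᴴ).trace = (ρ * (A + Aᴴ)).trace := by
  rw [mul_add, trace_add, trace_add, trace_mul_comm A ρ]

theorem exists_uniform_bound_on_density_matrices (A : Matrix n n ℂ) :
    ∃ β ≥ 1, ∀ ρ : Matrix n n ℂ, ρ.PosSemidef → ρ.trace = 1 →
      ‖ρ‖ ≤ β ∧ ‖A * ρ + ρ * Aᴴ‖ ≤ β ∧ ‖A * ρ * Aᴴ‖ ≤ β ∧
        ‖(ρ * (A + Aᴴ)).trace‖ ≤ β ∧ ‖(A * ρ * Aᴴ).trace‖ ≤ β := by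
  obtain ⟨T, hT, htrace⟩ := exists_norm_trace_le (n := n)
  set a := ‖A‖
  have ha : 0 ≤ a := norm_nonneg A
  refine ⟨(1 + T) * (1 + a) ^ 2, by nlinarith, fun ρ hρ htr => ?_⟩
  have hρ1 : ‖ρ‖ ≤ 1 := by simpa [htr] using hρ.frobenius_norm_le_re_trace
  have hB : ‖A * ρ + ρ * Aᴴ‖ ≤ 2 * a := calc
    ‖A * ρ + ρ * Aᴴ‖ ≤ a * ‖ρ‖ + ‖ρ‖ * a := by
      grw [norm_add_le, frobenius_norm_mul, frobenius_norm_mul, frobenius_norm_conjTranspose]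
    _ ≤ 2 * a := by nlinarith
  have hC : ‖A * ρ * Aᴴ‖ ≤ a ^ 2 := calc
    ‖A * ρ * Aᴴ‖ ≤ a * ‖ρ‖ * a := by
      grw [frobenius_norm_mul, frobenius_norm_mul, frobenius_norm_conjTranspose]
    _ ≤ a ^ 2 := by nlinarith
  have hs := (htrace _).trans (mul_le_mul_of_nonneg_left hB hT)
  have hc := (htrace _).trans (mul_le_mul_of_nonneg_left hC hT)
  rw [trace_mul_add_mul_conjTranspose] at hs
  refine ⟨?_, ?_, ?_, ?_, ?_⟩ <;> nlinarith

variable [DecidableEq n]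

theorem add_inv_smul_one_mul_mul_conjTranspose (A ρ : Matrix n n ℂ) {ε : ℝ} (hε : ε ≠ 0) :
    (A + (ε : ℂ)⁻¹ • (1 : Matrix n n ℂ)) * ρ * (A + (ε : ℂ)⁻¹ • (1 : Matrix n n ℂ))ᴴ =
      ((ε : ℂ) ^ 2)⁻¹ • (ρ + (ε : ℂ) • (A * ρ + ρ * Aᴴ) + (ε : ℂ) ^ 2 • (A * ρ * Aᴴ)) := by
  rw [conjTranspose_add, conjTranspose_smul, conjTranspose_one, ← Complex.ofReal_inv,
    Complex.star_def, Complex.conj_ofReal, Complex.ofReal_inv]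
  simp only [add_mul, mul_add, Matrix.smul_mul, Matrix.mul_smul, mul_one, one_mul, smul_add,
    smul_smul]
  match_scalars <;> field_simp

theorem inv_trace_smul_conj_add_inv_smul_one (A ρ : Matrix n n ℂ) (hρ : ρ.trace = 1) {ε : ℝ}
    (hε : ε ≠ 0) :
    ((A + (ε : ℂ)⁻¹ • (1 : Matrix n n ℂ)) * ρ *
        (A + (ε : ℂ)⁻¹ • (1 : Matrix n n ℂ))ᴴ).trace⁻¹ •
      ((A + (ε : ℂ)⁻¹ • (1 : Matrix n n ℂ)) * ρ * (A + (ε : ℂ)⁻¹ • (1 : Matrix n n ℂ))ᴴ) =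
      (1 + (ε : ℂ) * (ρ * (A + Aᴴ)).trace + (ε : ℂ) ^ 2 * (A * ρ * Aᴴ).trace)⁻¹ •
        (ρ + (ε : ℂ) • (A * ρ + ρ * Aᴴ) + (ε : ℂ) ^ 2 • (A * ρ * Aᴴ)) := by
  rw [add_inv_smul_one_mul_mul_conjTranspose A ρ hε, trace_smul, trace_add, trace_add,
    trace_smul, trace_smul, hρ, trace_mul_add_mul_conjTranspose, smul_smul]
  congr 1
  simp only [smul_eq_mul]
  field_simp

end Matrix

theorem stmt_1 (N : ℕ) (A : Matrix (Fin N) (Fin N) ℂ) :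
    ∃ ε₀ > (0 : ℝ), ∃ K > (0 : ℝ),
      ∀ ε : ℝ, 0 < ε → ε ≤ ε₀ →
        ∀ ρ : Matrix (Fin N) (Fin N) ℂ, ρ.PosSemidef → ρ.trace = 1 →
          (((A + (ε : ℂ)⁻¹ • (1 : Matrix (Fin N) (Fin N) ℂ)) * ρ *
              (A + (ε : ℂ)⁻¹ • (1 : Matrix (Fin N) (Fin N) ℂ))ᴴ).trace ≠ 0) →
          ‖(((A + (ε : ℂ)⁻¹ • (1 : Matrix (Fin N) (Fin N) ℂ)) * ρ *
                (A + (ε : ℂ)⁻¹ • (1 : Matrix (Fin N) (Fin N) ℂ))ᴴ).trace)⁻¹ •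
              ((A + (ε : ℂ)⁻¹ • (1 : Matrix (Fin N) (Fin N) ℂ)) * ρ *
                (A + (ε : ℂ)⁻¹ • (1 : Matrix (Fin N) (Fin N) ℂ))ᴴ)
            - ρ - (ε : ℂ) • (A * ρ + ρ * Aᴴ - (ρ * (A + Aᴴ)).trace • ρ)‖ ≤ K * ε ^ 2 := by
  obtain ⟨β, hβ, hbound⟩ := exists_uniform_bound_on_density_matrices A
  refine ⟨1 / (4 * β), by positivity, 12 * β ^ 3, by positivity, ?_⟩
  intro ε hε hεβ ρ hρ htr _
  obtain ⟨hρn, hB, hC, hs, hc⟩ := hbound ρ hρ htr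
  have hnorm : ‖(ε : ℂ)‖ = ε := by rw [Complex.norm_real, Real.norm_of_nonneg hε.le]
  rw [inv_trace_smul_conj_add_inv_smul_one A ρ htr hε.ne']
  exact (norm_normalized_expansion_sub_le hβ hρn hB hC hs hc (hnorm.trans_le hεβ)).trans_eq
    (by rw [hnorm])
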